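/- For permutations σ, τ of {1,...,n}, the quandles P_n^σ and P_n^τ are isomorphic if and only if σ and τ are conjugate in the symmetric group S_n. -/

import Mathlib

/-!
An isomorphism `f : P_n^σ → P_n^τ` either fixes `0`, and then `f (x * 0) = f x * 0` reads
`f ∘ σ = τ ∘ f`, or it moves `0`; in that case right multiplication by `f 0 ≠ 0` is trivial in
`P_n^τ`, which forces `σ = 1`, and symmetrically `τ = 1`, so `σ` and `τ` are conjugate by `1`.
-/

/-- The operation of `P_n^σ` on `{0,1,...,n}`: `x*y = x` if `y ≠ 0`, `x*0 = σ x`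
(with `σ` a permutation fixing `0`, encoding a permutation of `{1,...,n}`). -/
def pOp {n : ℕ} (σ : Equiv.Perm (Fin (n + 1))) (x y : Fin (n + 1)) : Fin (n + 1) :=
  if y = 0 then σ x else x

section PnQuandle

variable {n : ℕ} {σ τ f : Equiv.Perm (Fin (n + 1))}

@[simp]
theorem pOp_zero (x : Fin (n + 1)) : pOp σ x 0 = σ x := if_pos rfl

@[simp]
theorem pOp_of_ne_zero {y : Fin (n + 1)} (x : Fin (n + 1)) (hy : y ≠ 0) : pOp σ x y = x :=
  if_neg hy

theorem pOp_conj_hom {h : Equiv.Perm (Fin (n + 1))} (h0 : h 0 = 0) (x y : Fin (n + 1)) :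
    h (pOp (h⁻¹ * τ * h) x y) = pOp τ (h x) (h y) := by
  by_cases hy : y = 0
  · subst hy
    simp [h0]
  · have hhy : h y ≠ 0 := by rwa [← h0, h.injective.ne_iff]
    simp [hy, hhy]

theorem eq_conj_of_pOp_hom_of_map_zero
    (hf : ∀ x y, f (pOp σ x y) = pOp τ (f x) (f y)) (hf0 : f 0 = 0) :
    σ = f⁻¹ * τ * f := by
  ext x : 1
  rw [Equiv.Perm.mul_apply, Equiv.Perm.mul_apply, Equiv.Perm.eq_inv_iff_eq]
  simpa [hf0] using hf x 0

theorem left_eq_one_of_pOp_hom_of_map_zero_ne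
    (hf : ∀ x y, f (pOp σ x y) = pOp τ (f x) (f y)) (hf0 : f 0 ≠ 0) :
    σ = 1 := by
  ext x : 1
  simpa [hf0] using hf x 0

theorem right_eq_one_of_pOp_hom_of_map_zero_ne
    (hf : ∀ x y, f (pOp σ x y) = pOp τ (f x) (f y)) (hf0 : f 0 ≠ 0) :
    τ = 1 := by
  have hy : f.symm 0 ≠ 0 := by rwa [ne_eq, Equiv.symm_apply_eq, eq_comm]
  ext x : 1
  simpa [hy] using (hf (f.symm x) (f.symm 0)).symm

end PnQuandle

theorem pn_iso_iff_conjugate_general {n : ℕ} (σ τ : Equiv.Perm (Fin (n + 1))) :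
    (∃ f : Fin (n + 1) ≃ Fin (n + 1),
        ∀ x y, f (pOp σ x y) = pOp τ (f x) (f y)) ↔
    (∃ h : Equiv.Perm (Fin (n + 1)), h 0 = 0 ∧ σ = h⁻¹ * τ * h) := by
  constructor
  · rintro ⟨f, hf⟩
    by_cases hf0 : f 0 = 0
    · exact ⟨f, hf0, eq_conj_of_pOp_hom_of_map_zero hf hf0⟩
    · refine ⟨1, rfl, ?_⟩
      rw [left_eq_one_of_pOp_hom_of_map_zero_ne hf hf0,
        right_eq_one_of_pOp_hom_of_map_zero_ne hf hf0]
      simp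
  · rintro ⟨h, h0, rfl⟩
    exact ⟨h, pOp_conj_hom h0⟩

/-- `P_n^σ ≅ P_n^τ` iff `σ` and `τ` are conjugate in `S_n` (conjugating
permutations of `{1,...,n}` are encoded as permutations of `{0,...,n}` fixing `0`). -/
theorem pn_iso_iff_conjugate {n : ℕ} (σ τ : Equiv.Perm (Fin (n + 1)))
    (hσ0 : σ 0 = 0) (hτ0 : τ 0 = 0) :
    (∃ f : Fin (n + 1) ≃ Fin (n + 1),
        ∀ x y, f (pOp σ x y) = pOp τ (f x) (f y)) ↔
    (∃ h : Equiv.Perm (Fin (n + 1)), h 0 = 0 ∧ σ = h⁻¹ * τ * h) :=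
  pn_iso_iff_conjugate_general σ τ
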